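/- arXiv:2603.16023 — 2 statements merged into one kernel-verified Lean document; each statement's English description precedes it below -/
import Mathlib

section
/- Let T > c > 0 be real numbers. Then |log((c + iT)/(c − iT))| ≤ π + 2Tc/(T² − c²), where log denotes the principal branch of the complex logarithm. -/
open Complex Real

theorem abs_log_ratio_le (T c : ℝ) (hc : 0 < c) (hT : c < T) :
    ‖Complex.log (((c : ℂ) + Complex.I * T) / ((c : ℂ) - Complex.I * T))‖
      ≤ π + 2 * T * c / (T ^ 2 - c ^ 2) := by
  set z : ℂ := ((c : ℂ) + Complex.I * T) / ((c : ℂ) - Complex.I * T) with hz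
  have hne : (c : ℂ) - Complex.I * T ≠ 0 := by
    intro h
    have := congrArg Complex.re h
    simp at this
    exact hc.ne' this
  have hconj : (starRingEnd ℂ) ((c : ℂ) + Complex.I * T) = (c : ℂ) - Complex.I * T := by
    simp [Complex.ext_iff]
  have habs : ‖z‖ = 1 := by
    rw [hz, norm_div, ← hconj, Complex.norm_conj, div_self]
    rw [norm_ne_zero_iff]
    intro h
    have := congrArg Complex.re h
    simp at this
    exact hc.ne' this
  have hlog : Complex.log z = z.arg * Complex.I := by
    rw [Complex.log, habs, Real.log_one]
    simp
  have h1 : ‖Complex.log z‖ ≤ π := by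
    rw [hlog]
    simpa using Complex.abs_arg_le_pi z
  have h2 : 0 ≤ 2 * T * c / (T ^ 2 - c ^ 2) := by
    apply div_nonneg
    · nlinarith
    · nlinarith
  linarith
end

section
/- Let x ≥ 1 be real and let j be a positive integer. Then x (log x)^j − (x − 1/2)(log(x − 1/2))^j ≤ x (log x)^j · Σ_{m=1}^{j} C(j,m) · (1/((2x−1) log x))^m + (1/2)(log(x − 1/2))^j, provided x − 1/2 > 1 and log x ≥ 1. -/
open Real Finset

lemma aux_binom (L a : ℝ) (ha : 0 ≤ a) (hLa : 0 ≤ L - a) (j : ℕ) :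
    L ^ j - (L - a) ^ j ≤ ∑ m ∈ Finset.Icc 1 j, (j.choose m : ℝ) * L ^ (j - m) * a ^ m := by
  have hL : 0 ≤ L := le_trans ha (by linarith)
  have hexp : L ^ j = ∑ k ∈ Finset.range (j + 1),
      (L - a) ^ k * a ^ (j - k) * (j.choose k : ℝ) := by
    have := add_pow (L - a) a j
    rw [sub_add_cancel] at this
    exact this
  rw [Finset.sum_range_succ] at hexp
  simp only [Nat.sub_self, pow_zero, Nat.choose_self, Nat.cast_one, mul_one, one_mul] at hexp
  have h1 : L ^ j - (L - a) ^ j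
      = ∑ k ∈ Finset.range j, (L - a) ^ k * a ^ (j - k) * (j.choose k : ℝ) := by
    linarith [hexp]
  rw [h1]
  have h2 : ∑ k ∈ Finset.range j, (L - a) ^ k * a ^ (j - k) * (j.choose k : ℝ)
      ≤ ∑ k ∈ Finset.range j, L ^ k * a ^ (j - k) * (j.choose k : ℝ) := by
    apply Finset.sum_le_sum
    intro k _
    have : (L - a) ^ k ≤ L ^ k := pow_le_pow_left₀ hLa (by linarith) k
    have h3 : (0:ℝ) ≤ a ^ (j - k) * (j.choose k : ℝ) := by positivity
    nlinarith [pow_nonneg hLa k]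
  refine h2.trans_eq ?_
  refine Finset.sum_nbij' (fun k => j - k) (fun m => j - m) ?_ ?_ ?_ ?_ ?_
  · intro k hk
    simp only [Finset.mem_range] at hk
    simp only [Finset.mem_Icc]
    omega
  · intro m hm
    simp only [Finset.mem_Icc] at hm
    simp only [Finset.mem_range]
    omega
  · intro k hk; simp only [Finset.mem_range] at hk; show j - (j - k) = k; omega
  · intro m hm; simp only [Finset.mem_Icc] at hm; show j - (j - m) = m; omega
  · intro k hk
    simp only [Finset.mem_range] at hk
    have h4 : j - (j - k) = k := by omega
    rw [h4, Nat.choose_symm (by omega : k ≤ j)]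
    ring

theorem shift_log_pow_bound (x : ℝ) (hx : 1 ≤ x) (j : ℕ) (hj : 1 ≤ j)
    (hx' : 1 < x - 1 / 2) (hlog : 1 ≤ Real.log x) :
    x * (Real.log x) ^ j - (x - 1 / 2) * (Real.log (x - 1 / 2)) ^ j
      ≤ x * (Real.log x) ^ j *
          ∑ m ∈ Finset.Icc 1 j, (j.choose m : ℝ) * (1 / ((2 * x - 1) * Real.log x)) ^ m
        + (1 / 2) * (Real.log (x - 1 / 2)) ^ j := by
  set L := Real.log x with hL
  set a : ℝ := 1 / (2 * x - 1) with haa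
  have h2x : (0:ℝ) < 2 * x - 1 := by linarith
  have ha0 : 0 ≤ a := by positivity
  have haL : a ≤ L := by
    have : a ≤ 1 / 2 := by
      rw [haa]
      apply div_le_div_of_nonneg_left (by norm_num) (by norm_num) (by linarith)
    linarith
  have hLa0 : 0 ≤ L - a := by linarith
  -- log x - log (x - 1/2) ≤ a
  have hlogdiff : L - Real.log (x - 1 / 2) ≤ a := by
    have hx0 : (0:ℝ) < x := by linarith
    have hx2 : (0:ℝ) < x - 1 / 2 := by linarith
    have h1 : L - Real.log (x - 1 / 2) = Real.log (x / (x - 1 / 2)) := by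
      rw [Real.log_div (ne_of_gt hx0) (ne_of_gt hx2)]
    have h2 : Real.log (x / (x - 1 / 2)) ≤ x / (x - 1 / 2) - 1 :=
      Real.log_le_sub_one_of_pos (by positivity)
    have h3 : x / (x - 1 / 2) - 1 = a := by
      rw [haa, div_sub_one (ne_of_gt hx2), div_eq_div_iff (ne_of_gt hx2) (ne_of_gt h2x)]; ring
    linarith
  have hL' : L - a ≤ Real.log (x - 1 / 2) := by linarith
  have hpow : (L - a) ^ j ≤ (Real.log (x - 1 / 2)) ^ j := pow_le_pow_left₀ hLa0 hL' j
  have key := aux_binom L a ha0 hLa0 j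
  have hLpos : (0:ℝ) < L := by linarith
  -- rewrite the RHS sum
  have hsum : L ^ j * ∑ m ∈ Finset.Icc 1 j, (j.choose m : ℝ) * (1 / ((2 * x - 1) * L)) ^ m
      = ∑ m ∈ Finset.Icc 1 j, (j.choose m : ℝ) * L ^ (j - m) * a ^ m := by
    rw [Finset.mul_sum]
    apply Finset.sum_congr rfl
    intro m hm
    simp only [Finset.mem_Icc] at hm
    have hml : m ≤ j := hm.2
    have : (1 / ((2 * x - 1) * L)) ^ m = a ^ m * (1 / L) ^ m := by
      rw [haa, ← mul_pow]
      congr 1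
      rw [one_div, one_div, one_div, mul_inv]
    rw [this]
    have hLj : L ^ j * (1 / L) ^ m = L ^ (j - m) := by
      rw [one_div, inv_pow, ← Nat.sub_add_cancel hml, pow_add]
      field_simp
      rw [Nat.add_sub_cancel]
    calc L ^ j * ((j.choose m : ℝ) * (a ^ m * (1 / L) ^ m))
        = (j.choose m : ℝ) * (L ^ j * (1 / L) ^ m) * a ^ m := by ring
      _ = (j.choose m : ℝ) * L ^ (j - m) * a ^ m := by rw [hLj]
  have hxpos : (0:ℝ) < x := by linarith
  have main : x * (L ^ j - (Real.log (x - 1 / 2)) ^ j)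
      ≤ x * (L ^ j * ∑ m ∈ Finset.Icc 1 j, (j.choose m : ℝ) * (1 / ((2 * x - 1) * L)) ^ m) := by
    rw [hsum]
    apply mul_le_mul_of_nonneg_left _ (le_of_lt hxpos)
    linarith
  linarith [main]
end
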